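/- arXiv:1601.06504 — 4 statements merged into one kernel-verified Lean document; each statement's English description precedes it below -/
import Mathlib

section
/- Let M=(S,P,I,AP,L) be a finite generalized possibilistic Kripke structure with |S| = N and let B, C : S → [0,1] be fuzzy states. Then for every n ≥ N, sup_{0≤i≤n} (D_C ∘ P)^i = (D_C ∘ P)*, and consequently Po(s ⊨ C U^{≤n} B) = ( (D_C ∘ P)* ∘ D_B ∘ r_P )(s) for every state s ∈ S. -/
open unitInterval

instance : Fact ((0:ℝ) ≤ 1) := ⟨zero_le_one⟩

open Classical in
/-- The identity fuzzy matrix `P⁰`. -/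
noncomputable def matId {S : Type*} : S → S → unitInterval :=
  fun s t => if s = t then 1 else 0

/-- Max–min composition of fuzzy matrices: `(A∘B)(s,t) = sup_u A(s,u) ∧ B(u,t)`. -/
noncomputable def matComp {S : Type*} (A B : S → S → unitInterval) : S → S → unitInterval :=
  fun s t => ⨆ u, A s u ⊓ B u t

/-- `k`-th max–min power of a fuzzy matrix (`A⁰` is the identity matrix). -/
noncomputable def matPow {S : Type*} (A : S → S → unitInterval) : ℕ → S → S → unitInterval
  | 0 => matId
  | n + 1 => matComp (matPow A n) A

/-- Transitive closure `A⁺ = sup_{k ≥ 1} Aᵏ`. -/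
noncomputable def transClos {S : Type*} (A : S → S → unitInterval) : S → S → unitInterval :=
  fun s t => ⨆ k, matPow A (k + 1) s t

/-- Reflexive–transitive closure `A* = A⁰ ∨ A⁺ = sup_{k ≥ 0} Aᵏ`. -/
noncomputable def reflTransClos {S : Type*} (A : S → S → unitInterval) : S → S → unitInterval :=
  fun s t => ⨆ k, matPow A k s t

open Classical in
/-- The diagonal fuzzy matrix `D_B` of a fuzzy state `B`. -/
noncomputable def diagMat {S : Type*} (B : S → unitInterval) : S → S → unitInterval :=
  fun s t => if s = t then B s else 0

/-- Max–min application of a fuzzy matrix to a fuzzy vector. -/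
noncomputable def matVec {S : Type*} (A : S → S → unitInterval) (v : S → unitInterval) :
    S → unitInterval :=
  fun s => ⨆ t, A s t ⊓ v t

/-- `r_P(s) = sup { inf_{i≥0} P(s_i, s_{i+1}) : s₀ = s }`. -/
noncomputable def rP {S : Type*} (P : S → S → unitInterval) : S → unitInterval :=
  fun s => ⨆ (π : ℕ → S) (_ : π 0 = s), ⨅ i, P (π i) (π (i + 1))

/-- The possibility `Po(s ⊨ Φ)` of a fuzzy path property `Φ` at a state `s`:
`sup_{π ∈ S^ω, π₀ = s} ( inf_{i≥0} P(π_i,π_{i+1}) ∧ Φ(π) )`. -/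
noncomputable def Po {S : Type*} (P : S → S → unitInterval) (Φ : (ℕ → S) → unitInterval)
    (s : S) : unitInterval :=
  ⨆ (π : ℕ → S) (_ : π 0 = s), (⨅ i, P (π i) (π (i + 1))) ⊓ Φ π

/-- The generalized possibility measure of a set of infinite state sequences:
`Po(E) = sup_{π ∈ E} ( I(π₀) ∧ inf_{i≥0} P(π_i,π_{i+1}) )`. -/
noncomputable def PoSet {S : Type*} (P : S → S → unitInterval) (Init : S → unitInterval)
    (E : Set (ℕ → S)) : unitInterval :=
  ⨆ π ∈ E, Init (π 0) ⊓ ⨅ i, P (π i) (π (i + 1))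

/-! Read `Aᵏ s t` as the best weight (minimum of the entries along it) of a length-`k` path
from `s` to `t`. A path with more than `|S|` steps repeats a state, and cutting out the loop
between the two visits cannot lower a minimum, so powers beyond `|S|` add nothing to `A*`.
For the until formula, a path with `B` at time `j` and `C` before splits there into a
`D_C ∘ P`-path of length `j` and an infinite `P`-path from a `B`-state, whose best weight is
`r_P`; conversely such pieces concatenate. -/

open Finset

section Paths

variable {S : Type*}

noncomputable def pathWeight (A : S → S → I) (k : ℕ) (f : ℕ → S) : I :=
  ⨅ i ∈ range k, A (f i) (f (i + 1))

theorem pathWeight_zero (A : S → S → I) (f : ℕ → S) : pathWeight A 0 f = 1 := by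
  simp only [pathWeight, range_zero, notMem_empty, not_false_eq_true, iInf_neg, iInf_top]
  rfl

theorem pathWeight_succ (A : S → S → I) (k : ℕ) (f : ℕ → S) :
    pathWeight A (k + 1) f = A (f k) (f (k + 1)) ⊓ pathWeight A k f := by
  rw [pathWeight, range_add_one, Finset.iInf_insert]
  rfl

theorem pathWeight_congr {A : S → S → I} {k : ℕ} {f g : ℕ → S} (h : ∀ i ≤ k, f i = g i) :
    pathWeight A k f = pathWeight A k g :=
  biInf_congr fun i hi => by
    rw [mem_range] at hi
    rw [h i hi.le, h (i + 1) hi]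

theorem pathWeight_le_of_steps {A : S → S → I} {k l : ℕ} {f g : ℕ → S}
    (h : ∀ i < l, ∃ j < k, f j = g i ∧ f (j + 1) = g (i + 1)) :
    pathWeight A k f ≤ pathWeight A l g := by
  refine le_iInf₂ fun i hi => ?_
  obtain ⟨j, hj, h₀, h₁⟩ := h i (mem_range.1 hi)
  rw [← h₀, ← h₁]
  exact iInf₂_le j (mem_range.2 hj)

theorem iInf_le_pathWeight (A : S → S → I) (k : ℕ) (f : ℕ → S) :
    ⨅ i, A (f i) (f (i + 1)) ≤ pathWeight A k f :=
  le_iInf₂ fun i _ => iInf_le _ i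

theorem matPow_eq_iSup_pathWeight (A : S → S → I) (k : ℕ) (s t : S) :
    matPow A k s t = ⨆ (f : ℕ → S) (_ : f 0 = s ∧ f k = t), pathWeight A k f := by
  induction k generalizing t with
  | zero =>
    classical
    refine le_antisymm ?_ (iSup₂_le fun f ⟨h0, h1⟩ => ?_)
    · by_cases h : s = t
      · subst h
        exact le_iSup₂_of_le (fun _ => s) ⟨rfl, rfl⟩ (by rw [pathWeight_zero]; exact le_top)
      · simp [matPow, matId, h]
    · simp [matPow, matId, ← h0, ← h1, pathWeight_zero]
  | succ k ih =>
    refine le_antisymm ?_ (iSup₂_le fun f ⟨h0, h1⟩ => ?_)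
    · simp only [matPow, matComp, ih, iSup_inf_eq]
      refine iSup_le fun u => iSup₂_le fun f ⟨h0, h1⟩ => ?_
      classical
      refine le_iSup₂_of_le (Function.update f (k + 1) t) ⟨by simp [h0], by simp⟩ ?_
      have hupd : pathWeight A k (Function.update f (k + 1) t) = pathWeight A k f :=
        pathWeight_congr fun i hi => Function.update_of_ne (by omega) _ _
      rw [pathWeight_succ, hupd]
      simp [h1, inf_comm]
    · refine le_iSup_of_le (f k) (le_inf ?_ ?_)
      · rw [ih]
        exact le_iSup₂_of_le f ⟨h0, rfl⟩
          (pathWeight_le_of_steps fun i hi => ⟨i, by omega, rfl, rfl⟩)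
      · rw [pathWeight_succ, h1]
        exact inf_le_left

theorem pathWeight_le_matPow (A : S → S → I) {k : ℕ} {f : ℕ → S} {s t : S}
    (h0 : f 0 = s) (hk : f k = t) : pathWeight A k f ≤ matPow A k s t := by
  rw [matPow_eq_iSup_pathWeight]
  exact le_iSup₂_of_le f ⟨h0, hk⟩ le_rfl

def pathAppend (g : ℕ → S) (m : ℕ) (ρ : ℕ → S) : ℕ → S :=
  fun i => if i < m then g i else ρ (i - m)

theorem pathAppend_of_lt {g ρ : ℕ → S} {m i : ℕ} (h : i < m) : pathAppend g m ρ i = g i :=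
  if_pos h

theorem pathAppend_of_le {g ρ : ℕ → S} {m i : ℕ} (h : m ≤ i) :
    pathAppend g m ρ i = ρ (i - m) :=
  if_neg (not_lt.2 h)

theorem pathAppend_zero {g ρ : ℕ → S} {m : ℕ} (h : g m = ρ 0) : pathAppend g m ρ 0 = g 0 := by
  rcases Nat.eq_zero_or_pos m with rfl | hm
  · rw [pathAppend_of_le le_rfl, h]
  · exact pathAppend_of_lt hm

theorem pathAppend_add (g ρ : ℕ → S) (m i : ℕ) : pathAppend g m ρ (m + i) = ρ i := by
  rw [pathAppend_of_le (Nat.le_add_right m i), Nat.add_sub_cancel_left]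

theorem pathAppend_step {g ρ : ℕ → S} {m : ℕ} (h : g m = ρ 0) (i : ℕ) :
    (i < m ∧ pathAppend g m ρ i = g i ∧ pathAppend g m ρ (i + 1) = g (i + 1)) ∨
      (∃ j, i = m + j ∧ pathAppend g m ρ i = ρ j ∧ pathAppend g m ρ (i + 1) = ρ (j + 1)) := by
  rcases lt_or_ge i m with hi | hi
  · refine Or.inl ⟨hi, pathAppend_of_lt hi, ?_⟩
    rcases lt_or_ge (i + 1) m with hi' | hi'
    · exact pathAppend_of_lt hi'
    · rw [show i + 1 = m + 0 by omega, pathAppend_add, Nat.add_zero, h]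
  · obtain ⟨j, rfl⟩ := Nat.exists_eq_add_of_le hi
    exact Or.inr ⟨j, rfl, pathAppend_add g ρ m j, pathAppend_add g ρ m (j + 1)⟩

theorem exists_lt_map_eq_of_card_le [Fintype S] (f : ℕ → S) {k : ℕ}
    (hk : Fintype.card S ≤ k) : ∃ a b, a < b ∧ b ≤ k ∧ f a = f b := by
  obtain ⟨a, b, hab, hfab⟩ :=
    Fintype.exists_ne_map_eq_of_card_lt (fun i : Fin (k + 1) => f i) (by simpa using hk)
  rcases lt_or_gt_of_ne hab with h | h
  · exact ⟨a, b, h, Nat.lt_succ_iff.1 b.2, hfab⟩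
  · exact ⟨b, a, h, Nat.lt_succ_iff.1 a.2, hfab.symm⟩

theorem exists_pathWeight_le_of_card_le [Fintype S] (A : S → S → I) (f : ℕ → S) {k : ℕ}
    (hk : Fintype.card S ≤ k) :
    ∃ l < k, ∃ g : ℕ → S, g 0 = f 0 ∧ g l = f k ∧ pathWeight A k f ≤ pathWeight A l g := by
  obtain ⟨a, b, hab, hbk, hfab⟩ := exists_lt_map_eq_of_card_le f hk
  set ρ : ℕ → S := fun i => f (b + i)
  have hjoin : f a = ρ 0 := hfab
  have hend : pathAppend f a ρ (a + (k - b)) = f k := by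
    rw [pathAppend_add]
    exact congrArg f (Nat.add_sub_cancel' hbk)
  refine ⟨a + (k - b), by omega, pathAppend f a ρ, pathAppend_zero hjoin, hend,
    pathWeight_le_of_steps fun i hi => ?_⟩
  rcases pathAppend_step hjoin i with ⟨hia, h₀, h₁⟩ | ⟨j, rfl, h₀, h₁⟩
  · exact ⟨i, by omega, h₀.symm, h₁.symm⟩
  · exact ⟨b + j, by omega, h₀.symm, h₁.symm⟩

theorem matPow_le_iSup_range [Fintype S] (A : S → S → I) {n : ℕ} (hn : Fintype.card S ≤ n)
    (k : ℕ) (s t : S) : matPow A k s t ≤ ⨆ i ∈ range (n + 1), matPow A i s t := by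
  induction k using Nat.strong_induction_on with
  | _ k ih =>
  by_cases hkn : k ≤ n
  · exact le_iSup₂_of_le (f := fun i _ => matPow A i s t) k (mem_range.2 (by omega)) le_rfl
  rw [matPow_eq_iSup_pathWeight]
  refine iSup₂_le fun f ⟨h0, hk⟩ => ?_
  obtain ⟨l, hlk, g, hg0, hgl, hfg⟩ := exists_pathWeight_le_of_card_le A f (k := k) (by omega)
  calc pathWeight A k f ≤ pathWeight A l g := hfg
    _ ≤ matPow A l s t := pathWeight_le_matPow A (hg0.trans h0) (hgl.trans hk)
    _ ≤ _ := ih l hlk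

theorem iSup_range_matPow_eq_reflTransClos [Fintype S] (A : S → S → I) {n : ℕ}
    (hn : Fintype.card S ≤ n) (s t : S) :
    ⨆ i ∈ range (n + 1), matPow A i s t = reflTransClos A s t :=
  le_antisymm (iSup₂_le fun i _ => le_iSup (fun k => matPow A k s t) i)
    (iSup_le fun k => matPow_le_iSup_range A hn k s t)

end Paths

section BoundedUntil

variable {S : Type*}

theorem diagMat_matComp (C : S → I) (M : S → S → I) (s t : S) :
    matComp (diagMat C) M s t = C s ⊓ M s t := by
  refine le_antisymm (iSup_le fun u => ?_) (le_iSup_of_le s (by simp [diagMat]))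
  by_cases h : s = u
  · subst h
    simp [diagMat]
  · simp [diagMat, h]

theorem matComp_diagMat (M : S → S → I) (B : S → I) (s t : S) :
    matComp M (diagMat B) s t = M s t ⊓ B t := by
  refine le_antisymm (iSup_le fun u => ?_) (le_iSup_of_le t (by simp [diagMat]))
  by_cases h : u = t
  · subst h
    simp [diagMat]
  · simp [diagMat, h]

theorem pathWeight_diagMat_matComp (C : S → I) (P : S → S → I) (k : ℕ) (f : ℕ → S) :
    pathWeight (matComp (diagMat C) P) k f = (⨅ i ∈ range k, C (f i)) ⊓ pathWeight P k f := by
  simp only [pathWeight, diagMat_matComp, iInf_inf_eq]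

theorem iInf_le_rP (P : S → S → I) (π : ℕ → S) (j : ℕ) :
    ⨅ i, P (π i) (π (i + 1)) ≤ rP P (π j) :=
  le_iSup₂_of_le (fun i => π (j + i)) rfl (le_iInf fun i => iInf_le _ (j + i))

theorem pathWeight_inf_iInf_le_pathAppend (P : S → S → I) {g ρ : ℕ → S} {m : ℕ}
    (h : g m = ρ 0) :
    pathWeight P m g ⊓ ⨅ i, P (ρ i) (ρ (i + 1)) ≤
      ⨅ i, P (pathAppend g m ρ i) (pathAppend g m ρ (i + 1)) := by
  refine le_iInf fun i => ?_
  rcases pathAppend_step h i with ⟨hi, h₀, h₁⟩ | ⟨j, -, h₀, h₁⟩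
  · rw [h₀, h₁]
    exact inf_le_left.trans (iInf₂_le i (mem_range.2 hi))
  · rw [h₀, h₁]
    exact inf_le_right.trans (iInf_le _ j)

theorem Po_biSup {ι : Type*} (P : S → S → I) (p : ι → Prop) (Φ : ι → (ℕ → S) → I) (s : S) :
    Po P (fun π => ⨆ (j) (_ : p j), Φ j π) s = ⨆ (j) (_ : p j), Po P (Φ j) s := by
  simp only [Po, inf_iSup_eq]
  exact iSup₂_comm _

/-- The `j`-th term of the bounded until: `(C U^{≤n} B)(π) = ⨆ j ≤ n, untilAt C B j π`. -/
noncomputable def untilAt (C B : S → I) (j : ℕ) (π : ℕ → S) : I :=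
  B (π j) ⊓ ⨅ i ∈ range j, C (π i)

theorem Po_untilAt (P : S → S → I) (C B : S → I) (j : ℕ) (s : S) :
    Po P (untilAt C B j) s = ⨆ t, matPow (matComp (diagMat C) P) j s t ⊓ B t ⊓ rP P t := by
  refine le_antisymm (iSup₂_le fun π hπ => le_iSup_of_le (π j) ?_) (iSup_le fun t => ?_)
  · have hpow : (⨅ i ∈ range j, C (π i)) ⊓ pathWeight P j π ≤
        matPow (matComp (diagMat C) P) j s (π j) := by
      rw [← pathWeight_diagMat_matComp]
      exact pathWeight_le_matPow _ hπ rfl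
    refine le_inf (le_inf ?_ (inf_le_right.trans inf_le_left)) (inf_le_left.trans (iInf_le_rP ..))
    exact (le_inf (inf_le_right.trans inf_le_right)
      (inf_le_left.trans (iInf_le_pathWeight ..))).trans hpow
  · simp only [matPow_eq_iSup_pathWeight, rP, iSup_inf_eq, inf_iSup_eq]
    refine iSup₂_le fun ρ hρ => iSup₂_le fun g ⟨hg0, hgj⟩ => ?_
    have hjoin : g j = ρ 0 := hgj.trans hρ.symm
    refine le_iSup₂_of_le (pathAppend g j ρ) ((pathAppend_zero hjoin).trans hg0) ?_
    have hend : pathAppend g j ρ j = t := (pathAppend_add g ρ j 0).trans hρ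
    have hC : ⨅ i ∈ range j, C (pathAppend g j ρ i) = ⨅ i ∈ range j, C (g i) :=
      biInf_congr fun i hi => congrArg C (pathAppend_of_lt (mem_range.1 hi))
    rw [pathWeight_diagMat_matComp, untilAt, hend, hC]
    refine le_inf ((le_inf (inf_le_left.trans (inf_le_left.trans inf_le_right)) inf_le_right).trans
      (pathWeight_inf_iInf_le_pathAppend P hjoin)) ?_
    exact le_inf (inf_le_left.trans inf_le_right)
      (inf_le_left.trans (inf_le_left.trans inf_le_left))

end BoundedUntil

theorem bounded_until_stabilizes_general {S : Type*} [Fintype S]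
    (P : S → S → unitInterval)
    (B C : S → unitInterval) (n : ℕ) (hn : Fintype.card S ≤ n) :
    (∀ u v : S, (⨆ i ∈ Finset.range (n + 1), matPow (matComp (diagMat C) P) i u v) =
        reflTransClos (matComp (diagMat C) P) u v) ∧
    (∀ s : S,
      Po P (fun π => ⨆ j ∈ Finset.range (n + 1),
          B (π j) ⊓ ⨅ i ∈ Finset.range j, C (π i)) s =
        matVec (matComp (reflTransClos (matComp (diagMat C) P)) (diagMat B)) (rP P) s) := by
  set A := matComp (diagMat C) P
  have hclos := iSup_range_matPow_eq_reflTransClos A hn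
  refine ⟨hclos, fun s => ?_⟩
  calc Po P (fun π => ⨆ j ∈ range (n + 1), untilAt C B j π) s
      = ⨆ j ∈ range (n + 1), ⨆ t, matPow A j s t ⊓ B t ⊓ rP P t := by
        simp only [Po_biSup, Po_untilAt, A]
    _ = ⨆ t, (⨆ j ∈ range (n + 1), matPow A j s t) ⊓ B t ⊓ rP P t := by
        simp only [iSup_inf_eq]
        exact (iSup_congr fun _ => iSup_comm).trans iSup_comm
    _ = matVec (matComp (reflTransClos A) (diagMat B)) (rP P) s := by
        simp only [matVec, matComp_diagMat, hclos]

/-- For a finite GPKS with `|S| = N` and fuzzy states `B, C`, for every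
`n ≥ N` one has `sup_{0≤i≤n} (D_C ∘ P)^i = (D_C ∘ P)*`, and consequently
`Po(s ⊨ C U^{≤n} B) = ( (D_C ∘ P)* ∘ D_B ∘ r_P )(s)` for every state `s`. -/
theorem bounded_until_stabilizes {S : Type*} [Fintype S] [Nonempty S]
    {AP : Type*} [Fintype AP]
    (P : S → S → unitInterval) (Init : S → unitInterval) (L : S → AP → unitInterval)
    (B C : S → unitInterval) (n : ℕ) (hn : Fintype.card S ≤ n) :
    (∀ u v : S, (⨆ i ∈ Finset.range (n + 1), matPow (matComp (diagMat C) P) i u v) =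
        reflTransClos (matComp (diagMat C) P) u v) ∧
    (∀ s : S,
      Po P (fun π => ⨆ j ∈ Finset.range (n + 1),
          B (π j) ⊓ ⨅ i ∈ Finset.range j, C (π i)) s =
        matVec (matComp (reflTransClos (matComp (diagMat C) P)) (diagMat B)) (rP P) s) :=
  bounded_until_stabilizes_general P B C n hn
end

section
/- Let M=(S,P,I,AP,L) be a finite generalized possibilistic Kripke structure and B, C : S → [0,1] fuzzy states. Then for every state s ∈ S, the unbounded constrained reachability possibility satisfies Po(s ⊨ C U B) = ( (D_C ∘ P)* ∘ D_B ∘ r_P )(s), where (C U B)(π) = sup_{j≥0} ( B(π_j) ∧ inf_{0≤i<j} C(π_i) ). -/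
open unitInterval

/-!
Write `A = D_C ∘ P` and `V(s) = Po(s ⊨ C U B)`. A path witnessing `C U B` at step `j` splits
into a prefix `π₀ … π_j`, whose weight (transitions and the `C`-values along it) is bounded by
`Aʲ(π₀, π_j)`, and an infinite tail from `π_j`, whose weight is bounded by `r_P(π_j)`; this gives
`V ≤ A* ∘ D_B ∘ r_P`. Conversely `V ≥ B ∧ r_P` (stop immediately) and `V(s) ≥ A(s,u) ∧ V(u)`
(prepend a step), and any such `V` is `A*`-closed: `A*(s,t) ∧ V(t) ≤ V(s)`.
-/

section

open Finset

variable {S : Type*}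

/-- `fuzzyUntil B C` is the path property `C U B`. -/
noncomputable def fuzzyUntil (B C : S → unitInterval) (π : ℕ → S) : unitInterval :=
  ⨆ j : ℕ, B (π j) ⊓ ⨅ i ∈ range j, C (π i)

lemma diagMat_matComp_apply (C : S → unitInterval) (A : S → S → unitInterval) (s t : S) :
    matComp (diagMat C) A s t = C s ⊓ A s t := by
  refine le_antisymm (iSup_le fun u => ?_) (le_iSup_of_le s (by simp [diagMat]))
  by_cases h : s = u
  · subst h; simp [diagMat]
  · simp [diagMat, h]

lemma matComp_diagMat_apply (A : S → S → unitInterval) (B : S → unitInterval) (s t : S) :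
    matComp A (diagMat B) s t = A s t ⊓ B t := by
  refine le_antisymm (iSup_le fun u => ?_) (le_iSup_of_le t (by simp [diagMat]))
  by_cases h : u = t
  · subst h; simp [diagMat]
  · simp [diagMat, h]

lemma matVec_matComp_diagMat (A : S → S → unitInterval) (B v : S → unitInterval) (s : S) :
    matVec (matComp A (diagMat B)) v s = ⨆ t, A s t ⊓ (B t ⊓ v t) := by
  simp only [matVec, matComp_diagMat_apply, inf_assoc]

lemma matPow_inf_le_of_inf_le {A : S → S → unitInterval} {V : S → unitInterval}
    (hV : ∀ s u, A s u ⊓ V u ≤ V s) (k : ℕ) (s t : S) : matPow A k s t ⊓ V t ≤ V s := by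
  induction k generalizing t with
  | zero =>
    by_cases h : s = t
    · subst h; exact inf_le_right
    · simp [matPow, matId, h]
  | succ k ih =>
    simp only [matPow, matComp, iSup_inf_eq]
    exact iSup_le fun u => calc
      matPow A k s u ⊓ A u t ⊓ V t = matPow A k s u ⊓ (A u t ⊓ V t) := inf_assoc ..
      _ ≤ matPow A k s u ⊓ V u := inf_le_inf_left _ (hV u t)
      _ ≤ V s := ih u

lemma reflTransClos_inf_le_of_inf_le {A : S → S → unitInterval} {V : S → unitInterval}
    (hV : ∀ s u, A s u ⊓ V u ≤ V s) (s t : S) : reflTransClos A s t ⊓ V t ≤ V s := by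
  simp only [reflTransClos, iSup_inf_eq]
  exact iSup_le fun k => matPow_inf_le_of_inf_le hV k s t

lemma iInf_range_succ' (g : ℕ → unitInterval) (n : ℕ) :
    ⨅ i ∈ range (n + 1), g i = g 0 ⊓ ⨅ i ∈ range n, g (i + 1) := by
  rw [range_add_one', map_eq_image, Finset.iInf_insert, iInf_finset_image]
  rfl

lemma iInf_range_succ (g : ℕ → unitInterval) (n : ℕ) :
    ⨅ i ∈ range (n + 1), g i = (⨅ i ∈ range n, g i) ⊓ g n := by
  rw [range_add_one, Finset.iInf_insert, inf_comm]

lemma pathWeight_inf_le_matPow (P : S → S → unitInterval) (C : S → unitInterval)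
    (π : ℕ → S) (j : ℕ) :
    (⨅ i, P (π i) (π (i + 1))) ⊓ ⨅ i ∈ range j, C (π i) ≤
      matPow (matComp (diagMat C) P) j (π 0) (π j) := by
  induction j with
  | zero => simp [matPow, matId, le_one']
  | succ j ih =>
    refine le_iSup_of_le (π j) (le_inf ?_ ?_)
    · exact (inf_le_inf_left _ (by rw [iInf_range_succ]; exact inf_le_left)).trans ih
    · rw [diagMat_matComp_apply, iInf_range_succ]
      exact le_inf (inf_le_right.trans inf_le_right) (inf_le_left.trans (iInf_le _ j))

lemma pathWeight_le_rP (P : S → S → unitInterval) (π : ℕ → S) (j : ℕ) :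
    ⨅ i, P (π i) (π (i + 1)) ≤ rP P (π j) :=
  le_iSup₂_of_le (fun i => π (j + i)) rfl (le_iInf fun i => iInf_le _ (j + i))

lemma inf_rP_le_Po_fuzzyUntil (P : S → S → unitInterval) (B C : S → unitInterval) (s : S) :
    B s ⊓ rP P s ≤ Po P (fuzzyUntil B C) s := by
  simp only [rP, inf_iSup_eq]
  refine iSup₂_le fun π hπ => le_iSup₂_of_le π hπ (le_inf inf_le_right ?_)
  refine le_iSup_of_le 0 ?_
  simp [hπ]

lemma inf_Po_fuzzyUntil_le (P : S → S → unitInterval) (B C : S → unitInterval) (s u : S) :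
    C s ⊓ P s u ⊓ Po P (fuzzyUntil B C) u ≤ Po P (fuzzyUntil B C) s := by
  simp only [Po, inf_iSup_eq]
  refine iSup₂_le fun π hπ => ?_
  let sπ : ℕ → S := fun n => Nat.casesOn n s π
  refine le_iSup₂_of_le sπ rfl (le_inf (le_iInf fun i => ?_) ?_)
  · cases i with
    | zero => exact inf_le_left.trans (hπ ▸ inf_le_right)
    | succ i => exact inf_le_right.trans (inf_le_left.trans (iInf_le _ i))
  · simp only [fuzzyUntil, inf_iSup_eq]
    refine iSup_le fun j => le_iSup_of_le (j + 1) ?_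
    rw [iInf_range_succ']
    exact le_inf (inf_le_right.trans (inf_le_right.trans inf_le_left))
      (le_inf (inf_le_left.trans inf_le_left)
        (inf_le_right.trans (inf_le_right.trans inf_le_right)))

lemma Po_fuzzyUntil_le (P : S → S → unitInterval) (B C : S → unitInterval) (s : S) :
    Po P (fuzzyUntil B C) s ≤
      ⨆ t, reflTransClos (matComp (diagMat C) P) s t ⊓ (B t ⊓ rP P t) := by
  refine iSup₂_le fun π hπ => ?_
  subst hπ
  simp only [fuzzyUntil, inf_iSup_eq]
  refine iSup_le fun j => le_iSup_of_le (π j) (le_inf ?_ (le_inf ?_ ?_))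
  · exact le_iSup_of_le j ((inf_le_inf_left _ inf_le_right).trans
      (pathWeight_inf_le_matPow P C π j))
  · exact inf_le_right.trans inf_le_left
  · exact inf_le_left.trans (pathWeight_le_rP P π j)

lemma le_Po_fuzzyUntil (P : S → S → unitInterval) (B C : S → unitInterval) (s : S) :
    ⨆ t, reflTransClos (matComp (diagMat C) P) s t ⊓ (B t ⊓ rP P t) ≤
      Po P (fuzzyUntil B C) s := by
  refine iSup_le fun t => (inf_le_inf_left _ (inf_rP_le_Po_fuzzyUntil P B C t)).trans ?_
  refine reflTransClos_inf_le_of_inf_le (fun s u => ?_) s t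
  rw [diagMat_matComp_apply]
  exact inf_Po_fuzzyUntil_le P B C s u

end

theorem Po_until_eq_general {S : Type*} (P : S → S → unitInterval) (B C : S → unitInterval) (s : S) :
    Po P (fun π => ⨆ j : ℕ, B (π j) ⊓ ⨅ i ∈ Finset.range j, C (π i)) s =
      matVec (matComp (reflTransClos (matComp (diagMat C) P)) (diagMat B)) (rP P) s := by
  rw [matVec_matComp_diagMat]
  exact le_antisymm (Po_fuzzyUntil_le P B C s) (le_Po_fuzzyUntil P B C s)

/-- For a finite GPKS and fuzzy states `B, C`, the unbounded
constrained reachability possibility satisfies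
`Po(s ⊨ C U B) = ( (D_C ∘ P)* ∘ D_B ∘ r_P )(s)`, where
`(C U B)(π) = sup_{j≥0} ( B(π_j) ∧ inf_{0≤i<j} C(π_i) )`. -/
theorem Po_until_eq {S : Type*} [Fintype S] [Nonempty S]
    {AP : Type*} [Fintype AP]
    (P : S → S → unitInterval) (Init : S → unitInterval) (L : S → AP → unitInterval)
    (B C : S → unitInterval) (s : S) :
    Po P (fun π => ⨆ j : ℕ, B (π j) ⊓ ⨅ i ∈ Finset.range j, C (π i)) s =
      matVec (matComp (reflTransClos (matComp (diagMat C) P)) (diagMat B)) (rP P) s :=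
  Po_until_eq_general P B C s
end

section
/- Let M=(S,P,I,AP,L) be a finite generalized possibilistic Kripke structure. Then for all states s, t ∈ S, the repeated reachability possibility to the single state t satisfies Po(s ⊨ □◇{t}) = P⁺(s,t) ∧ P⁺(t,t), where Po(s ⊨ □◇{t}) is the supremum of inf_{i≥0} P(π_i,π_{i+1}) over all infinite sequences π with π₀ = s in which t occurs infinitely often. -/
open unitInterval

/-! Cutting a path at two visits to `t` at times `0 < j₁ < j₂` bounds its weight by
`P⁺(s,t) ∧ P⁺(t,t)`. Conversely, over a finite state space every entry of a max–min power is
attained by a finite path, and since `⊓` distributes over `⨆` it suffices, for all `k, m`, to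
follow an optimal path of length `k + 1` from `s` to `t` and then repeat an optimal cycle of
length `m + 1` through `t` forever. -/

section Paths

variable {S : Type*} {R : S → S → Prop}

def prependPath (f : ℕ → S) (K : ℕ) (p : ℕ → S) : ℕ → S :=
  fun i => if i < K then f i else p (i - K)

theorem prependPath_add (f : ℕ → S) (K : ℕ) (p : ℕ → S) (j : ℕ) :
    prependPath f K p (K + j) = p j := by
  simp [prependPath]

theorem prependPath_zero {f p : ℕ → S} {K : ℕ} (hfp : f K = p 0) :
    prependPath f K p 0 = f 0 := by
  rcases K.eq_zero_or_pos with rfl | hK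
  · simp [prependPath, hfp]
  · simp [prependPath, hK]

theorem prependPath_step {f p : ℕ → S} {K : ℕ} (hf : ∀ i < K, R (f i) (f (i + 1)))
    (hp : ∀ i, R (p i) (p (i + 1))) (hfp : f K = p 0) (i : ℕ) :
    R (prependPath f K p i) (prependPath f K p (i + 1)) := by
  unfold prependPath
  rcases lt_trichotomy (i + 1) K with hi | hi | hi
  · simpa [hi, (by omega : i < K)] using hf i (by omega)
  · simpa [hi, (by omega : i < K), ← hfp] using hf i (by omega)
  · rw [if_neg (by omega), if_neg (by omega), (by omega : i + 1 - K = i - K + 1)]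
    exact hp (i - K)

theorem rel_mod_of_cycle {g : ℕ → S} {M : ℕ} (hM : 0 < M) (hg : ∀ i < M, R (g i) (g (i + 1)))
    (hgM : g M = g 0) (i : ℕ) : R (g (i % M)) (g ((i + 1) % M)) := by
  have hmod : (i + 1) % M = (i % M + 1) % M := (Nat.mod_add_mod i M 1).symm
  have hlt : i % M < M := Nat.mod_lt i hM
  rcases (Nat.add_one_le_of_lt hlt).lt_or_eq with hi | hi
  · rw [hmod, Nat.mod_eq_of_lt hi]
    exact hg _ hlt
  · rw [hmod, hi, Nat.mod_self, ← hgM]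
    simpa only [hi] using hg _ hlt

theorem exists_infinite_chain_of_cycle {f g : ℕ → S} {K M : ℕ} {t : S}
    (hf : ∀ i < K, R (f i) (f (i + 1))) (hfK : f K = t)
    (hM : 0 < M) (hg : ∀ i < M, R (g i) (g (i + 1))) (hg0 : g 0 = t) (hgM : g M = t) :
    ∃ π : ℕ → S, π 0 = f 0 ∧ (∀ i, R (π i) (π (i + 1))) ∧ ∀ i : ℕ, ∃ j, i ≤ j ∧ π j = t := by
  have hfp : f K = g (0 % M) := by rw [Nat.zero_mod, hg0, hfK]
  refine ⟨prependPath f K (fun i => g (i % M)), prependPath_zero hfp,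
    prependPath_step hf (rel_mod_of_cycle hM hg (hgM.trans hg0.symm)) hfp, fun i => ?_⟩
  refine ⟨K + i * M, (Nat.le_mul_of_pos_right i hM).trans (Nat.le_add_left _ K), ?_⟩
  rw [prependPath_add, Nat.mul_mod_left, hg0]

end Paths

section MaxMin

variable {S : Type*} (A : S → S → unitInterval)

theorem matPow_one : matPow A 1 = A := by
  funext a b
  refine le_antisymm (iSup_le fun u => ?_) (le_iSup_of_le a ?_)
  · by_cases h : a = u
    · subst h
      exact inf_le_right
    · simp [matPow, matId, h]
  · simpa [matPow, matId] using le_one'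

theorem le_matPow_of_chain {c : unitInterval} {f : ℕ → S} :
    ∀ {n : ℕ}, (∀ i < n, c ≤ A (f i) (f (i + 1))) → c ≤ matPow A n (f 0) (f n)
  | 0, _ => by simpa [matPow, matId] using le_one'
  | n + 1, h => le_iSup_of_le (f n)
      (le_inf (le_matPow_of_chain fun i hi => h i (by omega)) (h n n.lt_succ_self))

theorem iInf_le_transClos (π : ℕ → S) {a b : ℕ} (hab : a < b) :
    (⨅ i, A (π i) (π (i + 1))) ≤ transClos A (π a) (π b) := by
  obtain ⟨k, rfl⟩ := Nat.exists_eq_add_of_lt hab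
  refine le_iSup_of_le k ?_
  have := le_matPow_of_chain A (f := fun i => π (a + i)) (n := k + 1)
    fun i _ => iInf_le (fun j => A (π j) (π (j + 1))) (a + i)
  simpa [add_assoc] using this

theorem exists_chain_of_le_matPow [Finite S] {c : unitInterval} {a : S} :
    ∀ {n : ℕ} {b : S}, c ≤ matPow A (n + 1) a b →
      ∃ f : ℕ → S, f 0 = a ∧ f (n + 1) = b ∧ ∀ i < n + 1, c ≤ A (f i) (f (i + 1))
  | 0, b, h => by
    rw [matPow_one] at h
    exact ⟨fun i => if i = 0 then a else b, rfl, rfl, fun i hi => by simpa [Nat.lt_one_iff.mp hi]⟩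
  | n + 1, b, h => by
    have : Nonempty S := ⟨a⟩
    obtain ⟨u, hu⟩ := exists_eq_ciSup_of_finite (f := fun u => matPow A (n + 1) a u ⊓ A u b)
    have hcu : c ≤ matPow A (n + 1) a u ⊓ A u b := h.trans_eq hu.symm
    obtain ⟨f, hf0, hfu, hf⟩ := exists_chain_of_le_matPow (le_inf_iff.mp hcu).1
    refine ⟨Function.update f (n + 2) b, by simp [hf0], by simp, fun i hi => ?_⟩
    rcases (Nat.lt_succ_iff.mp hi).lt_or_eq with hi | rfl
    · rw [Function.update_of_ne (by omega), Function.update_of_ne (by omega)]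
      exact hf i hi
    · simpa [hfu] using (le_inf_iff.mp hcu).2

end MaxMin

theorem Po_repeated_reach_single_state_general {S : Type*} [Fintype S]
    (P : S → S → unitInterval)
    (s t : S) :
    (⨆ (π : ℕ → S) (_ : π 0 = s ∧ ∀ i : ℕ, ∃ j, i ≤ j ∧ π j = t),
        ⨅ i, P (π i) (π (i + 1))) =
      transClos P s t ⊓ transClos P t t := by
  refine le_antisymm (iSup₂_le fun π ⟨hπ0, hvisit⟩ => ?_) ?_
  · obtain ⟨j₁, hj₁, hπj₁⟩ := hvisit 1
    obtain ⟨j₂, hj₂, hπj₂⟩ := hvisit (j₁ + 1)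
    have hst := iInf_le_transClos P π (a := 0) (b := j₁) (by omega)
    have htt := iInf_le_transClos P π (a := j₁) (b := j₂) (by omega)
    rw [hπ0, hπj₁] at hst
    rw [hπj₁, hπj₂] at htt
    exact le_inf hst htt
  · simp only [transClos, iSup_inf_iSup]
    refine iSup_le fun ⟨k, m⟩ => ?_
    set c := matPow P (k + 1) s t ⊓ matPow P (m + 1) t t
    obtain ⟨f, hf0, hfK, hf⟩ := exists_chain_of_le_matPow P (inf_le_left : c ≤ _)
    obtain ⟨g, hg0, hgM, hg⟩ := exists_chain_of_le_matPow P (inf_le_right : c ≤ _)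
    obtain ⟨π, hπ0, hπ, hvisit⟩ :=
      exists_infinite_chain_of_cycle (R := fun x y => c ≤ P x y) hf hfK m.succ_pos hg hg0 hgM
    exact le_iSup₂_of_le π ⟨hπ0.trans hf0, hvisit⟩ (le_iInf hπ)

/-- For a finite GPKS and states `s, t`, the repeated reachability
possibility to the single state `t` satisfies `Po(s ⊨ □◇{t}) = P⁺(s,t) ∧ P⁺(t,t)`,
where the left-hand side is the supremum of `inf_{i≥0} P(π_i,π_{i+1})` over all
infinite sequences `π` with `π₀ = s` in which `t` occurs infinitely often. -/
theorem Po_repeated_reach_single_state {S : Type*} [Fintype S] [Nonempty S]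
    {AP : Type*} [Fintype AP]
    (P : S → S → unitInterval) (Init : S → unitInterval) (L : S → AP → unitInterval)
    (s t : S) :
    (⨆ (π : ℕ → S) (_ : π 0 = s ∧ ∀ i : ℕ, ∃ j, i ≤ j ∧ π j = t),
        ⨅ i, P (π i) (π (i + 1))) =
      transClos P s t ⊓ transClos P t t :=
  Po_repeated_reach_single_state_general P s t
end

section
/- Let M=(S,P,I,AP,L) be a finite generalized possibilistic Kripke structure with labeling map L : S → Σ into a finite alphabet Σ, let A = (Q,Σ,δ,q₀,F) be a deterministic fuzzy finite automaton, and let P(σ) = inf_{n≥0} F(δ*(q₀, σ₀σ₁⋯σₙ)) be the associated fuzzy safety property. Then the necessity measure satisfies Ne^M(s ⊨ P) = 1 − Po^{M⊗A}((s,q_s) ⊨ ◇(¬B)), where Ne^M(s ⊨ P) = inf_{π∈S^ω, π₀=s} ( (1 − inf_{i≥0} P(π_i,π_{i+1})) ∨ P(L(π₀)L(π₁)⋯) ), q_s = δ(q₀, L(s)), B(s,q) = F(q), (¬B)(s,q) = 1 − F(q), and the product GPKS M⊗A has transition possibilities P'((s,q),(s',q')) = P(s,s') if q' = δ(q, L(s'))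 and 0 otherwise. -/
open unitInterval

/-- `dstar δ q w n = δ*(q, w₀w₁⋯wₙ)`: the extension of a deterministic transition
function `δ` to the finite word consisting of the first `n + 1` letters of `w`. -/
def dstar {Q A : Type*} (δ : Q → A → Q) (q : Q) (w : ℕ → A) : ℕ → Q
  | 0 => δ q (w 0)
  | n + 1 => δ (dstar δ q w n) (w (n + 1))

/-! Every path `π` of `M` lifts uniquely to the path `(π i, δ*(q₀, L(π₀)⋯L(πᵢ)))` of `M ⊗ A`
with the same transition possibility, and every other path of `M ⊗ A` from `(s, q_s)` contains
a transition of possibility `0`. Hence the possibility of a property of automaton runs is the same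
in `M` and in `M ⊗ A`. Applied to `¬P = ◇(¬B)` and combined with the duality
`Ne(s ⊨ Φ) = 1 − Po(s ⊨ ¬Φ)` this gives the theorem. -/

namespace unitInterval

def symmOrderIso : I ≃o Iᵒᵈ where
  toFun x := OrderDual.toDual (σ x)
  invFun y := σ (OrderDual.ofDual y)
  left_inv := symm_symm
  right_inv := symm_symm
  map_rel_iff' := symm_le_symm

lemma symm_iSup {ι : Sort*} (f : ι → I) : σ (⨆ i, f i) = ⨅ i, σ (f i) :=
  congrArg OrderDual.ofDual (symmOrderIso.map_iSup f)

lemma symm_iInf {ι : Sort*} (f : ι → I) : σ (⨅ i, f i) = ⨆ i, σ (f i) :=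
  congrArg OrderDual.ofDual (symmOrderIso.map_iInf f)

lemma symm_inf (a b : I) : σ (a ⊓ b) = σ a ⊔ σ b :=
  congrArg OrderDual.ofDual (symmOrderIso.map_inf a b)

end unitInterval

lemma iInf_symm_pathWeight_sup_eq_symm_Po {S : Type*} (P : S → S → I) (Φ : (ℕ → S) → I)
    (s : S) :
    ⨅ (π : ℕ → S) (_ : π 0 = s), σ (⨅ i, P (π i) (π (i + 1))) ⊔ Φ π =
      σ (Po P (fun π => σ (Φ π)) s) := by
  simp only [Po, symm_iSup, symm_inf, symm_symm]

section Product

variable {S Q A : Type*}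

/-- The transition distribution `P'` of the product `M ⊗ A`. -/
noncomputable def productTrans [DecidableEq Q] (P : S → S → I) (L : S → A) (δ : Q → A → Q) :
    S × Q → S × Q → I :=
  fun x y => if y.2 = δ x.2 (L y.1) then P x.1 y.1 else 0

def productPath (L : S → A) (δ : Q → A → Q) (q₀ : Q) (π : ℕ → S) : ℕ → S × Q :=
  fun i => (π i, dstar δ q₀ (fun j => L (π j)) i)

variable (P : S → S → I) (L : S → A) (δ : Q → A → Q) (q₀ : Q)

lemma productTrans_productPath [DecidableEq Q] (π : ℕ → S) (i : ℕ) :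
    productTrans P L δ (productPath L δ q₀ π i) (productPath L δ q₀ π (i + 1)) =
      P (π i) (π (i + 1)) :=
  if_pos rfl

lemma eq_productPath_of_snd_succ {ρ : ℕ → S × Q}
    (h₀ : (ρ 0).2 = δ q₀ (L (ρ 0).1)) (h : ∀ i, (ρ (i + 1)).2 = δ (ρ i).2 (L (ρ (i + 1)).1)) :
    ρ = productPath L δ q₀ (fun i => (ρ i).1) := by
  funext i
  refine Prod.ext rfl ?_
  induction i with
  | zero => exact h₀
  | succ n ih => exact (h n).trans (congrArg (δ · _) ih)

theorem Po_comp_dstar_eq_Po_productTrans [DecidableEq Q] (Φ : (ℕ → Q) → I) (s : S) :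
    Po P (fun π => Φ (dstar δ q₀ (fun i => L (π i)))) s =
      Po (productTrans P L δ) (fun ρ => Φ (fun i => (ρ i).2)) (s, δ q₀ (L s)) := by
  apply le_antisymm
  · refine iSup₂_le fun π hπ => ?_
    refine le_iSup₂_of_le (productPath L δ q₀ π) (by simp [productPath, dstar, hπ]) ?_
    simp only [productTrans_productPath]
    rfl
  · refine iSup₂_le fun ρ hρ => ?_
    by_cases h : ∀ i, (ρ (i + 1)).2 = δ (ρ i).2 (L (ρ (i + 1)).1)
    · have h₀ : (ρ 0).2 = δ q₀ (L (ρ 0).1) := by rw [hρ]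
      rw [eq_productPath_of_snd_succ L δ q₀ h₀ h]
      refine le_iSup₂_of_le (fun i => (ρ i).1) (congrArg Prod.fst hρ) ?_
      simp only [productTrans_productPath]
      rfl
    · obtain ⟨i, hi⟩ := not_forall.mp h
      have hweight : ⨅ j, productTrans P L δ (ρ j) (ρ (j + 1)) = 0 :=
        le_bot_iff.mp ((iInf_le _ i).trans_eq (if_neg hi))
      simp [hweight]

end Product

theorem Ne_fuzzy_regular_safety_general {S Q A : Type*}
    [DecidableEq Q]
    (P : S → S → unitInterval) (L : S → A)
    (δ : Q → A → Q) (q₀ : Q) (F : Q → unitInterval) (s : S) :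
    (⨅ (π : ℕ → S) (_ : π 0 = s),
        unitInterval.symm (⨅ i, P (π i) (π (i + 1))) ⊔
          ⨅ n, F (dstar δ q₀ (fun i => L (π i)) n)) =
      unitInterval.symm
        (⨆ (ρ : ℕ → S × Q) (_ : ρ 0 = (s, δ q₀ (L s))),
          (⨅ i, (if (ρ (i + 1)).2 = δ (ρ i).2 (L (ρ (i + 1)).1)
                  then P (ρ i).1 (ρ (i + 1)).1 else 0)) ⊓
            ⨆ j, unitInterval.symm (F (ρ j).2)) := by
  rw [iInf_symm_pathWeight_sup_eq_symm_Po]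
  simp only [symm_iInf]
  exact congrArg σ (Po_comp_dstar_eq_Po_productTrans P L δ q₀ (fun r => ⨆ j, σ (F (r j))) s)

/-- With `M`, `A` and the fuzzy safety property
`P(σ) = inf_{n≥0} F(δ*(q₀, σ₀⋯σₙ))` as in Statement 13, the necessity measure
satisfies `Ne^M(s ⊨ P) = 1 − Po^{M⊗A}((s,q_s) ⊨ ◇(¬B))`, where
`Ne^M(s ⊨ P) = inf_{π, π₀=s} ( (1 − inf_i P(π_i,π_{i+1})) ∨ P(L(π₀)L(π₁)⋯) )`,
`q_s = δ(q₀, L(s))`, `B(s,q) = F(q)` and `(¬B)(s,q) = 1 − F(q)`. -/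
theorem Ne_fuzzy_regular_safety {S Q A : Type*}
    [Fintype S] [Nonempty S] [Fintype Q] [Nonempty Q] [DecidableEq Q] [Fintype A]
    (P : S → S → unitInterval) (Init : S → unitInterval) (L : S → A)
    (δ : Q → A → Q) (q₀ : Q) (F : Q → unitInterval) (s : S) :
    (⨅ (π : ℕ → S) (_ : π 0 = s),
        unitInterval.symm (⨅ i, P (π i) (π (i + 1))) ⊔
          ⨅ n, F (dstar δ q₀ (fun i => L (π i)) n)) =
      unitInterval.symm
        (⨆ (ρ : ℕ → S × Q) (_ : ρ 0 = (s, δ q₀ (L s))),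
          (⨅ i, (if (ρ (i + 1)).2 = δ (ρ i).2 (L (ρ (i + 1)).1)
                  then P (ρ i).1 (ρ (i + 1)).1 else 0)) ⊓
            ⨆ j, unitInterval.symm (F (ρ j).2)) :=
  Ne_fuzzy_regular_safety_general P L δ q₀ F s
end
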